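/- There exist a natural number k and a finite set F of patterns p : Fin 2 × Fin 2 → Fin k (forbidden 2×2 patterns) such that the associated two-dimensional subshift of finite type X = { f : ℤ × ℤ → Fin k | for every a : ℤ × ℤ, the 2×2 pattern (fun (i, j) : Fin 2 × Fin 2 => f (a.1 + i, a.2 + j)) does not belong to F } is nonempty, and moreover no element of X is periodic: for every f ∈ X and every v : ℤ × ℤ with v ≠ 0, there exists x : ℤ × ℤ with f (x + v) ≠ f x. -/

import Mathlib

/-!
The witness is Kari's tile set rather than the trilobite and crab. A tile reads a digit from
below and a carry from the left and writes a digit upwards and a carry to the right, so that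
each row of digits is the row below multiplied by `2` or by `1/3`. Summed over a window of
length `N`, the carries telescope: across `V = n + m` rows with `n` doublings and `m` thirdings,
`3^m · (upper row sum) - 2^n · (lower row sum)` stays bounded independently of `N`. A period
`(p, V)` with `V ≠ 0` makes the two row sums differ by `O(|p|)`, while a row sum grows linearly
in `N` because no three consecutive digits vanish; hence `3^m = 2^n` and `V = 0`. A horizontal
period leaves finitely many possible rows, so two rows coincide and the same argument applies.
Tilings exist: row `y` carries the Beatty digits `⌊α_y (x + 1)⌋ - ⌊α_y x⌋` along the two-sided
orbit of `α ↦ 2α` (for `α ≤ 1`), `α ↦ α / 3` (otherwise), a bijection of `(1/3, 2]`.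
-/

open Finset

namespace AperiodicSFT

def windowSum (g : ℤ → ℤ) (s : ℤ) (N : ℕ) : ℤ := ∑ i ∈ range N, g (s + i)

lemma windowSum_const_mul (a : ℤ) (g : ℤ → ℤ) (s : ℤ) (N : ℕ) :
    windowSum (fun x => a * g x) s N = a * windowSum g s N :=
  (mul_sum _ _ _).symm

lemma windowSum_eq_add_sub {u v c : ℤ → ℤ} (h : ∀ x, u x = v x + (c (x + 1) - c x))
    (s : ℤ) (N : ℕ) : windowSum u s N = windowSum v s N + (c (s + N) - c s) := by
  have htele := sum_range_sub (fun i : ℕ => c (s + i)) N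
  simp only [Nat.cast_add, Nat.cast_one, Nat.cast_zero, add_zero, ← add_assoc] at htele
  simp only [windowSum, h, sum_add_distrib, htele]

lemma windowSum_mem_Icc {g : ℤ → ℤ} {M : ℤ} (hg : ∀ x, g x ∈ Set.Icc 0 M) (s : ℤ) (N : ℕ) :
    windowSum g s N ∈ Set.Icc 0 (M * N) :=
  ⟨sum_nonneg fun i _ => (hg _).1,
    (sum_le_sum fun i _ => (hg _).2).trans (by simp [mul_comm])⟩

lemma abs_windowSum_sub_le {g : ℤ → ℤ} {M : ℤ} (hg : ∀ x, g x ∈ Set.Icc 0 M) (s t : ℤ)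
    (N : ℕ) : |windowSum g t N - windowSum g s N| ≤ M * |t - s| := by
  wlog hst : s ≤ t generalizing s t
  · rw [abs_sub_comm, abs_sub_comm t]; exact this t s (by omega)
  obtain ⟨d, rfl⟩ : ∃ d : ℕ, t = s + d := ⟨(t - s).toNat, by omega⟩
  have hdN := sum_range_add (fun i : ℕ => g (s + i)) d N
  have hNd := sum_range_add (fun i : ℕ => g (s + i)) N d
  simp only [Nat.cast_add, ← add_assoc, Nat.add_comm N d] at hdN hNd
  have hhead := windowSum_mem_Icc hg s d
  have htail := windowSum_mem_Icc hg (s + N) d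
  simp only [windowSum, Set.mem_Icc] at hhead htail ⊢
  rw [add_sub_cancel_left, Nat.abs_cast, abs_le]
  constructor <;> linarith

lemma le_windowSum_of_window {g : ℤ → ℤ} (hw : ∀ x, 1 ≤ g x + g (x + 1) + g (x + 2))
    (s : ℤ) (K : ℕ) : (K : ℤ) ≤ windowSum g s (3 * K) := by
  induction K with
  | zero => simp [windowSum]
  | succ K ih =>
    have := hw (s + (3 * K : ℕ))
    simp only [windowSum, Nat.mul_succ, sum_range_succ, Nat.cast_add, add_assoc] at *
    push_cast at *
    linarith

lemma eq_zero_of_pow_eq_pow_of_coprime {a b m n : ℕ} (hab : a.Coprime b) (ha : 1 < a)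
    (hb : 1 < b) (h : a ^ m = b ^ n) : m = 0 ∧ n = 0 := by
  have hone : b ^ n = 1 := (Nat.coprime_self _).1 (h ▸ hab.pow m n)
  rw [hone] at h
  simp only [Nat.pow_eq_one] at h hone
  omega

/-- `A y` is the row of digits at height `y`, and `C y x` the carry entering position `x` of
that row from the left. -/
structure IsScalingRows (A C : ℤ → ℤ → ℤ) : Prop where
  digit_mem : ∀ y x, A y x ∈ Set.Icc (0 : ℤ) 2
  carry_mem : ∀ y x, C y x ∈ Set.Icc (0 : ℤ) 2
  step : ∀ y, (∀ x, A (y + 1) x = 2 * A y x - C y x + C y (x + 1)) ∨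
    (∀ x, 3 * A (y + 1) x = A y x + C y x - C y (x + 1))
  window : ∀ y x, 1 ≤ A y x + A y (x + 1) + A y (x + 2)

namespace IsScalingRows

variable {A C : ℤ → ℤ → ℤ} (h : IsScalingRows A C)
include h

lemma abs_carry_sub_le (y a b : ℤ) : |C y a - C y b| ≤ 2 := by
  have ha := h.carry_mem y a
  have hb := h.carry_mem y b
  rw [Set.mem_Icc] at ha hb
  rw [abs_le]; constructor <;> linarith

lemma exists_pow_mul_windowSum_approx (y : ℤ) (V : ℕ) : ∃ n m : ℕ, n + m = V ∧ ∃ D : ℤ,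
    ∀ s N, |3 ^ m * windowSum (A (y + V)) s N - 2 ^ n * windowSum (A y) s N| ≤ D := by
  induction V with
  | zero => exact ⟨0, 0, rfl, 0, fun s N => by simp⟩
  | succ V ih =>
    obtain ⟨n, m, hnm, D, hD⟩ := ih
    rw [Nat.cast_succ, ← add_assoc]
    have h3 : (0 : ℤ) ≤ 3 ^ m := by positivity
    rcases h.step (y + V) with hrow | hrow
    · refine ⟨n + 1, m, by omega, 2 * D + 3 ^ m * 2, fun s N => ?_⟩
      have hsum := windowSum_eq_add_sub (u := A (y + V + 1)) (v := fun x => 2 * A (y + V) x)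
        (c := C (y + V)) (fun x => by rw [hrow]; ring) s N
      rw [windowSum_const_mul] at hsum
      rw [hsum]
      calc _ = |2 * (3 ^ m * windowSum (A (y + V)) s N - 2 ^ n * windowSum (A y) s N) +
            3 ^ m * (C (y + V) (s + N) - C (y + V) s)| := by ring_nf
        _ ≤ 2 * D + 3 ^ m * 2 := by
          refine (abs_add_le _ _).trans ?_
          rw [abs_mul, abs_mul, abs_two, abs_of_nonneg h3]
          gcongr
          exacts [hD s N, h.abs_carry_sub_le _ _ _]
    · refine ⟨n, m + 1, by omega, D + 3 ^ m * 2, fun s N => ?_⟩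
      have hsum := windowSum_eq_add_sub (u := fun x => 3 * A (y + V + 1) x) (v := A (y + V))
        (c := fun x => -C (y + V) x) (fun x => by rw [hrow]; ring) s N
      rw [windowSum_const_mul] at hsum
      calc _ = |(3 ^ m * windowSum (A (y + V)) s N - 2 ^ n * windowSum (A y) s N) +
            3 ^ m * (C (y + V) s - C (y + V) (s + N))| := by rw [pow_succ, mul_assoc, hsum]; ring_nf
        _ ≤ D + 3 ^ m * 2 := by
          refine (abs_add_le _ _).trans ?_
          rw [abs_mul, abs_of_nonneg h3]
          gcongr
          exacts [hD s N, h.abs_carry_sub_le _ _ _]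

lemma exists_abs_pow_sub_mul_windowSum_le (y : ℤ) (V : ℕ) (p : ℤ)
    (hper : ∀ x, A (y + V) (x + p) = A y x) : ∃ n m : ℕ, n + m = V ∧ ∃ E : ℤ,
      ∀ N, |(3 : ℤ) ^ m - 2 ^ n| * windowSum (A y) 0 N ≤ E := by
  obtain ⟨n, m, hnm, D, hD⟩ := h.exists_pow_mul_windowSum_approx y V
  refine ⟨n, m, hnm, D + 2 ^ n * (2 * |p|), fun N => ?_⟩
  have happrox := hD p N
  have hshift := abs_windowSum_sub_le (h.digit_mem y) 0 p N
  have hrow : windowSum (A (y + V)) p N = windowSum (A y) 0 N :=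
    sum_congr rfl fun i _ => by rw [add_comm p, zero_add, hper]
  rw [hrow] at happrox
  rw [sub_zero] at hshift
  calc _ = |((3 : ℤ) ^ m - 2 ^ n) * windowSum (A y) 0 N| := by
        rw [abs_mul, abs_of_nonneg (windowSum_mem_Icc (h.digit_mem y) 0 N).1]
    _ = |(3 ^ m * windowSum (A y) 0 N - 2 ^ n * windowSum (A y) p N) +
        2 ^ n * (windowSum (A y) p N - windowSum (A y) 0 N)| := by ring_nf
    _ ≤ D + 2 ^ n * (2 * |p|) := by
      refine (abs_add_le _ _).trans ?_
      rw [abs_mul, abs_pow, abs_two]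
      gcongr

theorem not_forall_shift_eq (y : ℤ) {V : ℕ} (hV : V ≠ 0) (p : ℤ) :
    ¬ ∀ x, A (y + V) (x + p) = A y x := by
  intro hper
  obtain ⟨n, m, hnm, E, hE⟩ := h.exists_abs_pow_sub_mul_windowSum_le y V p hper
  have hpow : (3 : ℤ) ^ m = 2 ^ n := by
    by_contra hne
    set K := E.toNat + 1
    have hlarge := le_windowSum_of_window (h.window y) 0 K
    have hsmall := hE (3 * K)
    have hW := (windowSum_mem_Icc (h.digit_mem y) 0 (3 * K)).1
    have hgap : 1 ≤ |(3 : ℤ) ^ m - 2 ^ n| := Int.one_le_abs (sub_ne_zero.2 hne)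
    have := le_mul_of_one_le_left hW hgap
    omega
  obtain ⟨rfl, rfl⟩ := eq_zero_of_pow_eq_pow_of_coprime (a := 3) (b := 2) (by norm_num)
    (by norm_num) (by norm_num) (by exact_mod_cast hpow)
  omega

lemma exists_lt_row_eq {p : ℤ} (hp : p ≠ 0) (hper : ∀ y, Function.Periodic (A y) p) :
    ∃ y₁ y₂, y₁ < y₂ ∧ A y₁ = A y₂ := by
  let row (y : ℤ) : Fin p.natAbs → Set.Icc (0 : ℤ) 2 := fun i => ⟨A y i, h.digit_mem y i⟩
  obtain ⟨y₁, y₂, hne, heq⟩ := Finite.exists_ne_map_eq_of_infinite row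
  have hrows : A y₁ = A y₂ := funext fun x => by
    have hmod : ∀ y, A y x = A y (x % p) := fun y => by
      rw [Int.emod_def, mul_comm, ← smul_eq_mul, (hper y).sub_zsmul_eq]
    have hx : (x % p).toNat < p.natAbs := by
      have := Int.emod_lt x hp; have := Int.emod_nonneg x hp; omega
    have := congrArg (fun r => (r ⟨_, hx⟩ : ℤ)) heq
    simp only [row, Int.toNat_of_nonneg (Int.emod_nonneg x hp)] at this
    rw [hmod, hmod y₂, this]
  rcases hne.lt_or_gt with hlt | hlt
  exacts [⟨_, _, hlt, hrows⟩, ⟨_, _, hlt, hrows.symm⟩]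

theorem not_periodic {v : ℤ × ℤ} (hv : v ≠ 0) : ¬ ∀ y x, A (y + v.2) (x + v.1) = A y x := by
  obtain ⟨p, V⟩ := v
  intro hper
  rcases lt_trichotomy V 0 with hV | rfl | hV
  · refine h.not_forall_shift_eq V (V := (-V).toNat) (by omega) (-p) fun x => ?_
    rw [Int.toNat_of_nonneg (by omega), add_neg_cancel, ← sub_eq_add_neg, ← hper 0 (x - p),
      zero_add, sub_add_cancel]
  · have hp : p ≠ 0 := fun hp => hv (by simp [hp])
    obtain ⟨y₁, y₂, hlt, hrows⟩ := h.exists_lt_row_eq hp fun y x => by simpa using hper y x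
    refine h.not_forall_shift_eq y₁ (V := (y₂ - y₁).toNat) (by omega) 0 fun x => ?_
    rw [Int.toNat_of_nonneg (by omega), add_sub_cancel, add_zero, hrows]
  · refine h.not_forall_shift_eq 0 (V := V.toNat) (by omega) p fun x => ?_
    rw [Int.toNat_of_nonneg hV.le]
    simpa using hper 0 x

end IsScalingRows

noncomputable section

abbrev Digit := Set.Icc (0 : ℤ) 2

set_option synthInstance.maxSize 256 in
/-- `leftOutput` repeats the output of the left neighbour, so that a `2 × 2` block sees three
consecutive outputs. -/
structure Tile where
  doubles : Bool
  input : Digit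
  output : Digit
  carryIn : Digit
  carryOut : Digit
  leftOutput : Digit
deriving Fintype

def Tile.Valid (t : Tile) : Prop :=
  if t.doubles then (t.output : ℤ) = 2 * t.input - t.carryIn + t.carryOut
  else 3 * (t.output : ℤ) = t.input + t.carryIn - t.carryOut

def Tile.FitsLeftOf (t t' : Tile) : Prop :=
  t'.doubles = t.doubles ∧ t'.carryIn = t.carryOut ∧ t'.leftOutput = t.output ∧
    1 ≤ (t.leftOutput : ℤ) + t.output + t'.output

def IsTiling (T : ℤ × ℤ → Tile) : Prop :=
  ∀ x y, (T (x, y)).Valid ∧ (T (x, y)).FitsLeftOf (T (x + 1, y)) ∧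
    (T (x, y + 1)).input = (T (x, y)).output

namespace IsTiling

variable {T : ℤ × ℤ → Tile} (hT : IsTiling T)
include hT

lemma doubles_eq (x y : ℤ) : (T (x, y)).doubles = (T (0, y)).doubles := by
  induction x using Int.induction_on with
  | zero => rfl
  | succ i ih => rw [(hT i y).2.1.1, ih]
  | pred i ih => rw [← ih, ← (hT (-i - 1) y).2.1.1, sub_add_cancel]

theorem isScalingRows :
    IsScalingRows (fun y x => (T (x, y)).input) (fun y x => (T (x, y)).carryIn) where
  digit_mem y x := (T (x, y)).input.2
  carry_mem y x := (T (x, y)).carryIn.2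
  step y := by
    cases hd : (T (0, y)).doubles <;> [right; left] <;> intro x <;>
      obtain ⟨hvalid, ⟨-, hcarry, -, -⟩, hup⟩ := hT x y <;>
      simpa [Tile.Valid, hT.doubles_eq, hd, hup, hcarry] using hvalid
  window y x := by
    obtain ⟨-, ⟨-, -, hleft, -⟩, -⟩ := hT x (y - 1)
    obtain ⟨-, ⟨-, -, -, hwindow⟩, -⟩ := hT (x + 1) (y - 1)
    simp only [← (hT _ (y - 1)).2.2, sub_add_cancel, hleft, add_assoc] at hwindow ⊢
    exact hwindow

theorem not_periodic {v : ℤ × ℤ} (hv : v ≠ 0) : ¬ Function.Periodic T v := fun hper =>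
  hT.isScalingRows.not_periodic hv fun y x => congrArg (fun t => (t.input : ℤ)) (hper (x, y))

end IsTiling

section Beatty

variable {K : Type*} [Field K] [LinearOrder K] [IsStrictOrderedRing K] [FloorRing K]

def beattyDigit (β : K) (x : ℤ) : ℤ := ⌊β * (x + 1 : ℤ)⌋ - ⌊β * x⌋

def floorCarry (k : ℕ) (t : K) : ℤ := ⌊k * t⌋ - k * ⌊t⌋

lemma floorCarry_mem_Icc {k : ℕ} (hk : 0 < k) (t : K) :
    floorCarry k t ∈ Set.Icc 0 (k - 1 : ℤ) := by
  have hk' : (0 : K) < k := by exact_mod_cast hk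
  have hlow : (k : ℤ) * ⌊t⌋ ≤ ⌊k * t⌋ :=
    Int.le_floor.2 (by push_cast; exact mul_le_mul_of_nonneg_left (Int.floor_le t) hk'.le)
  have hhigh : ⌊(k : K) * t⌋ < k * ⌊t⌋ + k :=
    Int.floor_lt.2 (by push_cast; nlinarith [Int.lt_floor_add_one t])
  rw [floorCarry, Set.mem_Icc]; omega

lemma beattyDigit_mem_Icc {β : K} {n : ℤ} (h0 : 0 ≤ β) (hn : β ≤ n) (x : ℤ) :
    beattyDigit β x ∈ Set.Icc 0 n := by
  have hsplit : β * ((x + 1 : ℤ) : K) = β * x + β := by push_cast; ring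
  have hlow := Int.floor_le_floor (show β * x ≤ β * x + β by linarith)
  have hhigh := Int.floor_le_floor (show β * x + β ≤ β * x + n by linarith)
  rw [Int.floor_add_intCast] at hhigh
  rw [beattyDigit, hsplit, Set.mem_Icc]; omega

omit [IsStrictOrderedRing K] in
lemma beattyDigit_mul (k : ℕ) (β : K) (x : ℤ) : beattyDigit (k * β) x =
    k * beattyDigit β x - floorCarry k (β * x) + floorCarry k (β * (x + 1 : ℤ)) := by
  simp only [beattyDigit, floorCarry, mul_assoc]; ring

lemma one_le_beattyDigit_add {β : K} (h : 1 ≤ 3 * β) (x : ℤ) :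
    1 ≤ beattyDigit β (x - 1) + beattyDigit β x + beattyDigit β (x + 1) := by
  have hsplit : β * ((x + 1 + 1 : ℤ) : K) = β * ((x - 1 : ℤ) : K) + 3 * β := by push_cast; ring
  have hgrow := Int.floor_le_floor
    (show β * ((x - 1 : ℤ) : K) + 1 ≤ β * ((x - 1 : ℤ) : K) + 3 * β by linarith)
  rw [← hsplit, Int.floor_add_one] at hgrow
  simp only [beattyDigit, sub_add_cancel]; omega

end Beatty

def scale (q : ℚ) : ℚ := if q ≤ 1 then 2 * q else q / 3

def unscale (q : ℚ) : ℚ := if q ≤ 2 / 3 then 3 * q else q / 2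

lemma scale_mem {q : ℚ} (hq : q ∈ Set.Ioc (1 / 3 : ℚ) 2) : scale q ∈ Set.Ioc (1 / 3 : ℚ) 2 := by
  obtain ⟨h1, h2⟩ := hq
  unfold scale; split_ifs <;> constructor <;> linarith

lemma unscale_mem {q : ℚ} (hq : q ∈ Set.Ioc (1 / 3 : ℚ) 2) :
    unscale q ∈ Set.Ioc (1 / 3 : ℚ) 2 := by
  obtain ⟨h1, h2⟩ := hq
  unfold unscale; split_ifs <;> constructor <;> linarith

lemma unscale_scale {q : ℚ} (hq : q ∈ Set.Ioc (1 / 3 : ℚ) 2) : unscale (scale q) = q := by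
  obtain ⟨h1, h2⟩ := hq
  unfold scale unscale; split_ifs <;> first | (exfalso; linarith) | ring

lemma scale_unscale {q : ℚ} (hq : q ∈ Set.Ioc (1 / 3 : ℚ) 2) : scale (unscale q) = q := by
  obtain ⟨h1, h2⟩ := hq
  unfold scale unscale; split_ifs <;> first | (exfalso; linarith) | ring

def scalePerm : Equiv.Perm (Set.Ioc (1 / 3 : ℚ) 2) where
  toFun q := ⟨scale q, scale_mem q.2⟩
  invFun q := ⟨unscale q, unscale_mem q.2⟩
  left_inv q := Subtype.ext (unscale_scale q.2)
  right_inv q := Subtype.ext (scale_unscale q.2)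

def slope (y : ℤ) : ℚ := ((scalePerm ^ y) ⟨1, by norm_num, by norm_num⟩ : ℚ)

lemma slope_mem (y : ℤ) : slope y ∈ Set.Ioc (1 / 3 : ℚ) 2 := ((scalePerm ^ y) _).2

lemma slope_add_one (y : ℤ) : slope (y + 1) = scale (slope y) := by
  rw [slope, add_comm, zpow_one_add, Equiv.Perm.mul_apply]; rfl

def rowCarry (y x : ℤ) : ℤ :=
  if slope y ≤ 1 then floorCarry 2 (slope y * x) else floorCarry 3 (slope (y + 1) * x)

lemma rowCarry_mem (y x : ℤ) : rowCarry y x ∈ Set.Icc (0 : ℤ) 2 := by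
  unfold rowCarry; split_ifs
  · exact Set.Icc_subset_Icc_right (by norm_num) (floorCarry_mem_Icc (by norm_num) _)
  · simpa using floorCarry_mem_Icc (k := 3) (by norm_num) (slope (y + 1) * x)

lemma beattyDigit_slope_mem (y x : ℤ) : beattyDigit (slope y) x ∈ Set.Icc (0 : ℤ) 2 :=
  beattyDigit_mem_Icc (by linarith [(slope_mem y).1]) (by exact_mod_cast (slope_mem y).2) x

def beattyTiling (z : ℤ × ℤ) : Tile where
  doubles := decide (slope z.2 ≤ 1)
  input := ⟨beattyDigit (slope z.2) z.1, beattyDigit_slope_mem _ _⟩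
  output := ⟨beattyDigit (slope (z.2 + 1)) z.1, beattyDigit_slope_mem _ _⟩
  carryIn := ⟨rowCarry z.2 z.1, rowCarry_mem _ _⟩
  carryOut := ⟨rowCarry z.2 (z.1 + 1), rowCarry_mem _ _⟩
  leftOutput := ⟨beattyDigit (slope (z.2 + 1)) (z.1 - 1), beattyDigit_slope_mem _ _⟩

lemma beattyTiling_valid (x y : ℤ) : (beattyTiling (x, y)).Valid := by
  by_cases hy : slope y ≤ 1
  · have hs : slope (y + 1) = (2 : ℕ) * slope y := by
      rw [slope_add_one, scale, if_pos hy]; norm_num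
    simp only [Tile.Valid, beattyTiling, rowCarry, hy, decide_true, if_true]
    rw [hs, beattyDigit_mul]; push_cast; ring
  · have hs : slope y = (3 : ℕ) * slope (y + 1) := by
      rw [slope_add_one, scale, if_neg hy]; push_cast; ring
    simp only [Tile.Valid, beattyTiling, rowCarry, hy, decide_false, if_false]
    rw [hs, beattyDigit_mul]; push_cast; ring

theorem isTiling_beattyTiling : IsTiling beattyTiling := fun x y =>
  ⟨beattyTiling_valid x y,
    ⟨rfl, rfl, Subtype.ext (by simp [beattyTiling]),
      one_le_beattyDigit_add (by linarith [(slope_mem (y + 1)).1]) x⟩, rfl⟩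

def Allowed (P : Fin 2 × Fin 2 → Tile) : Prop :=
  (P (0, 0)).Valid ∧ (P (0, 0)).FitsLeftOf (P (1, 0)) ∧ (P (0, 1)).input = (P (0, 0)).output

def tileEquiv : Tile ≃ Fin (Fintype.card Tile) := Fintype.equivFin Tile

open Classical in
def forbidden : Finset (Fin 2 × Fin 2 → Fin (Fintype.card Tile)) :=
  univ.filter fun P => ¬ Allowed (tileEquiv.symm ∘ P)

lemma forall_notMem_forbidden_iff (f : ℤ × ℤ → Fin (Fintype.card Tile)) :
    (∀ a : ℤ × ℤ, (fun p : Fin 2 × Fin 2 => f (a.1 + (p.1 : ℤ), a.2 + (p.2 : ℤ))) ∉ forbidden) ↔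
      IsTiling (tileEquiv.symm ∘ f) := by
  simp only [forbidden, mem_filter, mem_univ, true_and, not_not, Prod.forall]
  simp [Allowed, IsTiling]

end

end AperiodicSFT

open AperiodicSFT

/-- There is a nonempty two-dimensional subshift of finite type over ℤ²,
determined by finitely many forbidden 2×2 patterns, none of whose
configurations is periodic. -/
theorem exists_nonempty_aperiodic_SFT :
    ∃ (k : ℕ) (F : Finset (Fin 2 × Fin 2 → Fin k)),
      (Set.Nonempty {f : ℤ × ℤ → Fin k |
          ∀ a : ℤ × ℤ,
            (fun p : Fin 2 × Fin 2 => f (a.1 + (p.1 : ℤ), a.2 + (p.2 : ℤ))) ∉ F}) ∧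
      ∀ f ∈ {f : ℤ × ℤ → Fin k |
          ∀ a : ℤ × ℤ,
            (fun p : Fin 2 × Fin 2 => f (a.1 + (p.1 : ℤ), a.2 + (p.2 : ℤ))) ∉ F},
        ∀ v : ℤ × ℤ, v ≠ 0 → ∃ x : ℤ × ℤ, f (x + v) ≠ f x := by
  refine ⟨Fintype.card Tile, forbidden, ⟨tileEquiv ∘ beattyTiling, ?_⟩, fun f hf v hv => ?_⟩
  · rw [Set.mem_ofPred_eq, forall_notMem_forbidden_iff]
    simpa [Function.comp_def] using isTiling_beattyTiling
  · by_contra! hper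
    exact ((forall_notMem_forbidden_iff f).1 hf).not_periodic hv fun z => by simp [hper z]
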